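/- arXiv:1205.6971 — 2 statements merged into one kernel-verified Lean document; each statement's English description precedes it below -/
import Mathlib

section
/- Let $I_2\subseteq I_1$ be monomial ideals in $S=\mathbb{K}[x_1,\dots,x_n]$. Then there exists an integer $k\geq 1$ such that for every integer $s\geq 1$, $\mathrm{sdepth}(I_1^{sk}/I_2^{sk})\leq \mathrm{sdepth}(\overline{I_1}/\overline{I_2})$. -/
open MvPolynomial

noncomputable section

/-- `I` is a monomial ideal: it is generated by a set of monomials. -/
def IsMonomialIdeal {K : Type*} [Field K] {n : ℕ} (I : Ideal (MvPolynomial (Fin n) K)) : Prop :=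
  ∃ A : Set (Fin n →₀ ℕ),
    I = Ideal.span ((fun d => (monomial d (1 : K) : MvPolynomial (Fin n) K)) '' A)

/-- The integral closure of a monomial ideal `I`: the ideal generated by all monomials `u`
such that `u ^ m ∈ I ^ m` for some `m ≥ 1`. -/
def intCl {K : Type*} [Field K] {n : ℕ} (I : Ideal (MvPolynomial (Fin n) K)) :
    Ideal (MvPolynomial (Fin n) K) :=
  Ideal.span {u | (∃ d : Fin n →₀ ℕ, u = monomial d (1 : K)) ∧ ∃ m : ℕ, 1 ≤ m ∧ u ^ m ∈ I ^ m}

/-- The set of exponent vectors of monomials belonging to `I`. -/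
def monomialSet {K : Type*} [Field K] {n : ℕ} (I : Ideal (MvPolynomial (Fin n) K)) :
    Set (Fin n →₀ ℕ) :=
  {d | (monomial d (1 : K) : MvPolynomial (Fin n) K) ∈ I}

/-- The set of exponent vectors of the monomials in the Stanley space `a·K[Z]`. -/
def stanleySpace {n : ℕ} (a : Fin n →₀ ℕ) (Z : Finset (Fin n)) : Set (Fin n →₀ ℕ) :=
  {b | (∀ i, a i ≤ b i) ∧ ∀ i ∉ Z, b i = a i}

/-- `D` is a Stanley decomposition of the set of monomials `M`. -/
def IsStanleyDecomp {n : ℕ} (M : Set (Fin n →₀ ℕ))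
    (D : Finset ((Fin n →₀ ℕ) × Finset (Fin n))) : Prop :=
  (∀ p ∈ D, stanleySpace p.1 p.2 ⊆ M) ∧
  (∀ b ∈ M, ∃ p ∈ D, b ∈ stanleySpace p.1 p.2) ∧
  (∀ p ∈ D, ∀ q ∈ D, p ≠ q → Disjoint (stanleySpace p.1 p.2) (stanleySpace q.1 q.2))

/-- Stanley depth of a set of monomials. -/
def sdepthSet {n : ℕ} (M : Set (Fin n →₀ ℕ)) : ℕ :=
  sSup {k | k ≤ n ∧ ∃ D : Finset ((Fin n →₀ ℕ) × Finset (Fin n)),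
    IsStanleyDecomp M D ∧ ∀ p ∈ D, k ≤ p.2.card}

/-- Stanley depth of a monomial ideal `I` (as a module). -/
def sdepthI {K : Type*} [Field K] {n : ℕ} (I : Ideal (MvPolynomial (Fin n) K)) : ℕ :=
  sdepthSet (monomialSet I)

/-- Stanley depth of `S/I` for a monomial ideal `I`. -/
def sdepthQ {K : Type*} [Field K] {n : ℕ} (I : Ideal (MvPolynomial (Fin n) K)) : ℕ :=
  sdepthSet (monomialSet I)ᶜ

/-- Stanley depth of `I/J` for monomial ideals `J ⊆ I`. -/
def sdepthIJ {K : Type*} [Field K] {n : ℕ} (I J : Ideal (MvPolynomial (Fin n) K)) : ℕ :=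
  sdepthSet (monomialSet I \ monomialSet J)

/-! `intCl I` is spanned by the monomials `u` with `u ^ m ∈ I ^ m` for
some `m ≥ 1`. By Dickson's lemma finitely many of them, dividing all the others, suffice, so a
single exponent `k` works for every monomial of `intCl I`; then `u ∈ intCl I ↔ u ^ c ∈ I ^ c`
whenever `k ∣ c`. Hence the exponent set of `intCl I₁ / intCl I₂` is the preimage under
`b ↦ c • b` of the exponent set of `I₁ ^ c / I₂ ^ c`.

The preimage of a Stanley space `a · K[Z]` under `b ↦ c • b` is empty or the Stanley space
`⌈a / c⌉ · K[Z]`, so every Stanley decomposition pulls back to one with the same sets `Z`, and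
Stanley depth can only grow under this pullback. -/

section Dickson

variable {α : Type*} [PartialOrder α] [WellQuasiOrderedLE α]

theorem exists_finset_subset_forall_exists_le (E : Set α) :
    ∃ G : Finset α, ↑G ⊆ E ∧ ∀ d ∈ E, ∃ e ∈ G, e ≤ d := by
  have hfin : {x | Minimal (· ∈ E) x}.Finite :=
    WellQuasiOrderedLE.finite_of_isAntichain (setOfPred_minimal_antichain _)
  refine ⟨hfin.toFinset, fun e he => (hfin.mem_toFinset.mp he).prop, fun d hd => ?_⟩
  obtain ⟨e, hed, he⟩ := (Set.isPWO_of_wellQuasiOrderedLE E).exists_le_minimal hd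
  exact ⟨e, hfin.mem_toFinset.mpr he, hed⟩

end Dickson

section Stanley

variable {n c : ℕ}

theorem preimage_nsmul_stanleySpace (hc : 0 < c) {a : Fin n →₀ ℕ} {Z : Finset (Fin n)}
    (hne : ((c • ·) ⁻¹' stanleySpace a Z).Nonempty) :
    (c • ·) ⁻¹' stanleySpace a Z = stanleySpace (a ⌈/⌉ c) Z := by
  obtain ⟨b₀, -, hb₀⟩ := hne
  ext b
  simp only [stanleySpace, Set.mem_preimage, Set.mem_ofPred_eq, Finsupp.smul_apply, smul_eq_mul,
    Finsupp.ceilDiv_apply] at hb₀ ⊢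
  refine and_congr (forall_congr' fun i => (ceilDiv_le_iff_le_mul hc).symm) ?_
  refine forall₂_congr fun i hi => ?_
  rw [← hb₀ i hi, ← smul_eq_mul c (b₀ i), smul_ceilDiv hc, smul_eq_mul,
    Nat.mul_left_cancel_iff hc]

theorem IsStanleyDecomp.preimage_nsmul (hc : 0 < c) {M : Set (Fin n →₀ ℕ)}
    {D : Finset ((Fin n →₀ ℕ) × Finset (Fin n))} (hD : IsStanleyDecomp M D) :
    ∃ D' : Finset ((Fin n →₀ ℕ) × Finset (Fin n)),
      IsStanleyDecomp ((c • ·) ⁻¹' M) D' ∧ ∀ q ∈ D', ∃ p ∈ D, p.2 = q.2 := by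
  classical
  obtain ⟨hsub, hcov, hdisj⟩ := hD
  let D₀ := D.filter fun p => ((c • ·) ⁻¹' stanleySpace p.1 p.2).Nonempty
  have hspace : ∀ p ∈ D₀, stanleySpace (p.1 ⌈/⌉ c) p.2 = (c • ·) ⁻¹' stanleySpace p.1 p.2 :=
    fun p hp => (preimage_nsmul_stanleySpace hc (Finset.mem_filter.mp hp).2).symm
  have hmem : ∀ {p}, p ∈ D₀ → p ∈ D := fun hp => (Finset.mem_filter.mp hp).1
  refine ⟨D₀.image fun p => (p.1 ⌈/⌉ c, p.2), ⟨?_, ?_, ?_⟩, ?_⟩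
  · simp only [Finset.forall_mem_image]
    intro p hp
    rw [hspace p hp]
    exact Set.preimage_mono (hsub p (hmem hp))
  · intro b hb
    obtain ⟨p, hp, hbp⟩ := hcov _ hb
    have hp₀ : p ∈ D₀ := Finset.mem_filter.mpr ⟨hp, b, hbp⟩
    exact ⟨_, Finset.mem_image_of_mem _ hp₀, (hspace p hp₀).symm ▸ hbp⟩
  · simp only [Finset.forall_mem_image]
    intro p hp p' hp' hne
    rw [hspace p hp, hspace p' hp']
    exact (hdisj p (hmem hp) p' (hmem hp') fun h => hne (h ▸ rfl)).preimage _
  · simp only [Finset.forall_mem_image]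
    exact fun p hp => ⟨p, hmem hp, rfl⟩

theorem sdepthSet_le_sdepthSet_preimage_nsmul (hc : 0 < c) (M : Set (Fin n →₀ ℕ)) :
    sdepthSet M ≤ sdepthSet ((c • ·) ⁻¹' M) := by
  refine csSup_le_csSup' ⟨n, fun k hk => hk.1⟩ ?_
  rintro k ⟨hkn, D, hD, hcard⟩
  obtain ⟨D', hD', hsnd⟩ := hD.preimage_nsmul hc
  refine ⟨hkn, D', hD', fun q hq => ?_⟩
  obtain ⟨p, hp, hpq⟩ := hsnd q hq
  exact hpq ▸ hcard p hp

end Stanley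

section IntegralClosure

variable {K : Type*} [Field K] {n : ℕ}

theorem monomial_mem_intCl_iff {I : Ideal (MvPolynomial (Fin n) K)} {d : Fin n →₀ ℕ} :
    monomial d (1 : K) ∈ intCl I ↔
      ∃ e ≤ d, ∃ m, 1 ≤ m ∧ (monomial e (1 : K)) ^ m ∈ I ^ m := by
  classical
  have hspan : intCl I = Ideal.span ((fun e => monomial e (1 : K)) ''
      {e | ∃ m, 1 ≤ m ∧ (monomial e (1 : K)) ^ m ∈ I ^ m}) := by
    unfold intCl
    congr 1
    ext u
    constructor
    · rintro ⟨⟨e, rfl⟩, he⟩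
      exact ⟨e, he, rfl⟩
    · rintro ⟨e, he, rfl⟩
      exact ⟨⟨e, rfl⟩, he⟩
  rw [hspan, mem_ideal_span_monomial_image, support_monomial, if_neg one_ne_zero]
  simp only [Finset.mem_singleton, forall_eq, Set.mem_ofPred_eq]
  exact ⟨fun ⟨e, he, hed⟩ => ⟨e, hed, he⟩, fun ⟨e, hed, he⟩ => ⟨e, he, hed⟩⟩

theorem pow_mem_pow_of_dvd {R : Type*} [CommSemiring R] {I : Ideal R} {u : R} {m k : ℕ}
    (h : u ^ m ∈ I ^ m) (hdvd : m ∣ k) : u ^ k ∈ I ^ k := by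
  obtain ⟨t, rfl⟩ := hdvd
  rw [pow_mul, pow_mul]
  exact Ideal.pow_mem_pow h t

theorem exists_forall_monomial_mem_intCl_pow_mem_pow (I : Ideal (MvPolynomial (Fin n) K)) :
    ∃ k, 0 < k ∧ ∀ d : Fin n →₀ ℕ,
      monomial d (1 : K) ∈ intCl I → (monomial d (1 : K)) ^ k ∈ I ^ k := by
  obtain ⟨G, hGE, hG⟩ := exists_finset_subset_forall_exists_le
    {e : Fin n →₀ ℕ | ∃ m, 1 ≤ m ∧ (monomial e (1 : K)) ^ m ∈ I ^ m}
  choose m hm hpow using fun e : G => hGE e.2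
  refine ⟨∏ e, m e, Finset.prod_pos fun e _ => hm e, fun d hd => ?_⟩
  obtain ⟨e, hed, he⟩ := monomial_mem_intCl_iff.mp hd
  obtain ⟨g, hg, hge⟩ := hG e he
  have hgk := pow_mem_pow_of_dvd (hpow ⟨g, hg⟩) (Finset.dvd_prod_of_mem m (Finset.mem_univ _))
  rw [← add_tsub_cancel_of_le (hge.trans hed), ← mul_one (1 : K), ← monomial_mul, mul_pow]
  exact Ideal.mul_mem_right _ _ hgk

theorem exists_preimage_nsmul_monomialSet_pow_eq (I : Ideal (MvPolynomial (Fin n) K)) :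
    ∃ k, 0 < k ∧ ∀ c, k ∣ c → 0 < c →
      (c • ·) ⁻¹' monomialSet (I ^ c) = monomialSet (intCl I) := by
  obtain ⟨k, hk, hpow⟩ := exists_forall_monomial_mem_intCl_pow_mem_pow I
  refine ⟨k, hk, fun c hkc hc => Set.ext fun d => ?_⟩
  have hpow_eq : monomial (c • d) (1 : K) = (monomial d (1 : K)) ^ c := by
    rw [monomial_pow, one_pow]
  simp only [Set.mem_preimage, monomialSet, Set.mem_ofPred_eq, hpow_eq]
  exact ⟨fun h => Ideal.subset_span ⟨⟨d, rfl⟩, c, hc, h⟩,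
    fun h => pow_mem_pow_of_dvd (hpow d h) hkc⟩

end IntegralClosure

theorem stmt9_general {K : Type*} [Field K] {n : ℕ} (I₁ I₂ : Ideal (MvPolynomial (Fin n) K)) :
    ∃ k : ℕ, 1 ≤ k ∧ ∀ s : ℕ, 1 ≤ s →
      sdepthIJ (I₁ ^ (s * k)) (I₂ ^ (s * k)) ≤ sdepthIJ (intCl I₁) (intCl I₂) := by
  obtain ⟨k₁, hk₁, h₁⟩ := exists_preimage_nsmul_monomialSet_pow_eq I₁
  obtain ⟨k₂, hk₂, h₂⟩ := exists_preimage_nsmul_monomialSet_pow_eq I₂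
  refine ⟨k₁ * k₂, Nat.mul_pos hk₁ hk₂, fun s hs => ?_⟩
  have hc : 0 < s * (k₁ * k₂) := Nat.mul_pos hs (Nat.mul_pos hk₁ hk₂)
  unfold sdepthIJ
  rw [← h₁ _ ((dvd_mul_right k₁ k₂).mul_left s) hc, ← h₂ _ ((dvd_mul_left k₂ k₁).mul_left s) hc,
    ← Set.preimage_sdiff]
  exact sdepthSet_le_sdepthSet_preimage_nsmul hc _

theorem stmt9 {K : Type*} [Field K] {n : ℕ} (I₁ I₂ : Ideal (MvPolynomial (Fin n) K))
    (hI₁ : IsMonomialIdeal I₁) (hI₂ : IsMonomialIdeal I₂) (h : I₂ ≤ I₁) :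
    ∃ k : ℕ, 1 ≤ k ∧ ∀ s : ℕ, 1 ≤ s →
      sdepthIJ (I₁ ^ (s * k)) (I₂ ^ (s * k)) ≤ sdepthIJ (intCl I₁) (intCl I₂) :=
  stmt9_general I₁ I₂
end
end

section
/- Let $I$ be a normal monomial ideal in $S=\mathbb{K}[x_1,\dots,x_n]$. Then there exists an integer $k\geq 1$ such that $\mathrm{sdepth}(I^k)=\mathrm{sdepth}(I^{sk})$ for every integer $s\geq 1$; likewise there exists $k'\geq 1$ with $\mathrm{sdepth}(S/I^{k'})=\mathrm{sdepth}(S/I^{sk'})$ for all $s\geq 1$. -/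
open MvPolynomial

noncomputable section

/-!
Scaling exponents by `s` sends the monomials of `I ^ k` into `I ^ (s * k)`, and by normality
`x ^ b ∈ I ^ k` as soon as `x ^ (s • b) ∈ I ^ (s * k)`. Pulling a Stanley decomposition of
`I ^ (s * k)` (or of its complement) back along `b ↦ s • b` gives one of `I ^ k` (or of its
complement) with the same sets of free variables, so `sdepth (I ^ (s * k)) ≤ sdepth (I ^ k)`.
Any `k` minimising `sdepth (I ^ k)` therefore works.
-/

lemma smul_mem_stanleySpace_iff {n c : ℕ} (hc : 0 < c) {a b : Fin n →₀ ℕ} {Z : Finset (Fin n)}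
    (hdvd : ∀ i ∉ Z, c ∣ a i) : c • b ∈ stanleySpace a Z ↔ b ∈ stanleySpace (a ⌈/⌉ c) Z := by
  have hle : (∀ i, a i ≤ (c • b) i) ↔ ∀ i, (a ⌈/⌉ c) i ≤ b i := by
    rw [← Finsupp.le_def, ← Finsupp.le_def, ceilDiv_le_iff_le_smul hc]
  have heq : ∀ i ∉ Z, (c • b) i = a i ↔ b i = (a ⌈/⌉ c) i := by
    intro i hi
    obtain ⟨t, ht⟩ := hdvd i hi
    rw [Finsupp.smul_apply, Finsupp.ceilDiv_apply, ht, ← smul_eq_mul c t, smul_ceilDiv hc,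
      smul_eq_mul, smul_eq_mul, Nat.mul_left_cancel_iff hc]
  exact and_congr hle (forall₂_congr heq)

/-- Divide the corners by `c`, rounding up; the Stanley spaces whose corner is not divisible by
`c` in some fixed direction contain no point of the form `c • b` and are dropped. -/
lemma IsStanleyDecomp.exists_preimage_smul {n c : ℕ} (hc : 0 < c) {M : Set (Fin n →₀ ℕ)}
    {D : Finset ((Fin n →₀ ℕ) × Finset (Fin n))} (hD : IsStanleyDecomp M D) :
    ∃ D' : Finset ((Fin n →₀ ℕ) × Finset (Fin n)),
      IsStanleyDecomp ((c • ·) ⁻¹' M) D' ∧ ∀ p' ∈ D', ∃ p ∈ D, p'.2 = p.2 := by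
  classical
  obtain ⟨hsub, hcover, hdisj⟩ := hD
  let contract : (Fin n →₀ ℕ) × Finset (Fin n) → (Fin n →₀ ℕ) × Finset (Fin n) :=
    fun p => (p.1 ⌈/⌉ c, p.2)
  refine ⟨(D.filter fun p => ∀ i ∉ p.2, c ∣ p.1 i).image contract, ⟨?_, ?_, ?_⟩, ?_⟩
  · simp only [Finset.mem_image, Finset.mem_filter]
    rintro _ ⟨p, ⟨hp, hdvd⟩, rfl⟩ b hb
    exact hsub p hp ((smul_mem_stanleySpace_iff hc hdvd).2 hb)
  · intro b hb
    obtain ⟨p, hp, hbp⟩ := hcover _ hb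
    have hdvd : ∀ i ∉ p.2, c ∣ p.1 i := fun i hi => ⟨b i, (hbp.2 i hi).symm⟩
    exact ⟨contract p, Finset.mem_image_of_mem _ (Finset.mem_filter.2 ⟨hp, hdvd⟩),
      (smul_mem_stanleySpace_iff hc hdvd).1 hbp⟩
  · simp only [Finset.mem_image, Finset.mem_filter]
    rintro _ ⟨p, ⟨hp, hpdvd⟩, rfl⟩ _ ⟨q, ⟨hq, hqdvd⟩, rfl⟩ hne
    have hpq : p ≠ q := fun h => hne (h ▸ rfl)
    exact Set.disjoint_left.2 fun b hbp hbq => Set.disjoint_left.1 (hdisj p hp q hq hpq)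
      ((smul_mem_stanleySpace_iff hc hpdvd).2 hbp) ((smul_mem_stanleySpace_iff hc hqdvd).2 hbq)
  · simp only [Finset.mem_image, Finset.mem_filter]
    rintro _ ⟨p, ⟨hp, -⟩, rfl⟩
    exact ⟨p, hp, rfl⟩

lemma sdepthSet_le_sdepthSet_preimage_smul {n c : ℕ} (hc : 0 < c) (M : Set (Fin n →₀ ℕ)) :
    sdepthSet M ≤ sdepthSet ((c • ·) ⁻¹' M) := by
  refine csSup_le_csSup' ⟨n, fun k hk => hk.1⟩ ?_
  rintro k ⟨hkn, D, hD, hkD⟩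
  obtain ⟨D', hD', hD'D⟩ := hD.exists_preimage_smul hc
  refine ⟨hkn, D', hD', fun p' hp' => ?_⟩
  obtain ⟨p, hp, hcard⟩ := hD'D p' hp'
  exact hcard ▸ hkD p hp

lemma preimage_smul_monomialSet_pow {K : Type*} [Field K] {n : ℕ}
    {J : Ideal (MvPolynomial (Fin n) K)} (hJ : intCl J = J) {s : ℕ} (hs : 1 ≤ s) :
    (s • ·) ⁻¹' monomialSet (J ^ s) = monomialSet J := by
  ext b
  have hpow : (monomial b (1 : K)) ^ s = monomial (s • b) 1 := by rw [monomial_pow, one_pow]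
  change monomial (s • b) (1 : K) ∈ J ^ s ↔ monomial b (1 : K) ∈ J
  rw [← hpow]
  refine ⟨fun hb => ?_, fun hb => Ideal.pow_mem_pow hb s⟩
  rw [← hJ]
  exact Ideal.subset_span ⟨⟨b, rfl⟩, s, hs, hb⟩

lemma exists_forall_apply_eq_apply_mul {β : Type*} [LinearOrder β] [WellFoundedLT β] (f : ℕ → β)
    (h : ∀ k s, 1 ≤ k → 1 ≤ s → f (s * k) ≤ f k) :
    ∃ k, 1 ≤ k ∧ ∀ s, 1 ≤ s → f k = f (s * k) := by
  obtain ⟨k, hk, hmin⟩ := exists_minimalFor_of_wellFoundedLT (1 ≤ ·) f ⟨1, le_rfl⟩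
  exact ⟨k, hk, fun s hs =>
    le_antisymm (hmin (Nat.mul_le_mul hs hk) (h k s hk hs)) (h k s hk hs)⟩

theorem stmt11_general {K : Type*} [Field K] {n : ℕ} (I : Ideal (MvPolynomial (Fin n) K))
    (hnormal : ∀ m : ℕ, 1 ≤ m → intCl (I ^ m) = I ^ m) :
    (∃ k : ℕ, 1 ≤ k ∧ ∀ s : ℕ, 1 ≤ s → sdepthI (I ^ k) = sdepthI (I ^ (s * k))) ∧
    (∃ k' : ℕ, 1 ≤ k' ∧ ∀ s : ℕ, 1 ≤ s → sdepthQ (I ^ k') = sdepthQ (I ^ (s * k'))) := by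
  have hscale : ∀ k s, 1 ≤ k → 1 ≤ s →
      (s • ·) ⁻¹' monomialSet (I ^ (s * k)) = monomialSet (I ^ k) := fun k s hk hs => by
    rw [mul_comm, pow_mul]
    exact preimage_smul_monomialSet_pow (hnormal k hk) hs
  refine ⟨exists_forall_apply_eq_apply_mul _ fun k s hk hs => ?_,
    exists_forall_apply_eq_apply_mul _ fun k s hk hs => ?_⟩
  · simpa only [sdepthI, hscale k s hk hs] using
      sdepthSet_le_sdepthSet_preimage_smul hs (monomialSet (I ^ (s * k)))
  · simpa only [sdepthQ, Set.preimage_compl, hscale k s hk hs] using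
      sdepthSet_le_sdepthSet_preimage_smul hs (monomialSet (I ^ (s * k)))ᶜ

theorem stmt11 {K : Type*} [Field K] {n : ℕ} (I : Ideal (MvPolynomial (Fin n) K))
    (hI : IsMonomialIdeal I) (hnormal : ∀ m : ℕ, 1 ≤ m → intCl (I ^ m) = I ^ m) :
    (∃ k : ℕ, 1 ≤ k ∧ ∀ s : ℕ, 1 ≤ s → sdepthI (I ^ k) = sdepthI (I ^ (s * k))) ∧
    (∃ k' : ℕ, 1 ≤ k' ∧ ∀ s : ℕ, 1 ≤ s → sdepthQ (I ^ k') = sdepthQ (I ^ (s * k'))) :=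
  stmt11_general I hnormal
end
end
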